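/- Let ν be a Borel probability measure on [0,1] and let (X_i)_{i≥1} be i.i.d. random variables with law ν; write X̄_m = (X₁+⋯+X_m)/m. Assume ∫₀¹ x/(1−x) dν(x) < ∞ and ∫₀¹ x dν(x) < 1/2. Then there exists m* ∈ ℕ, m* ≥ 1, such that E[X̄_{m*}/(1−X̄_{m*})] < 1. (In terms of the condensation criterion, the Bianconi–Barabási model BB(m*) with fitness law ν^{(m*)} condensates.) -/

import Mathlib

/-!
Choose `t` strictly between `E[X₁]` and `1/2`, so that `t/(1-t) < 1`. On the event `X̄_m ≤ t`
the integrand is at most `t/(1-t)`. On the complementary event, Jensen's inequality for the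
convex map `x ↦ x/(1-x)` bounds it by the average of the `Xᵢ/(1-Xᵢ)`. By the strong law of
large numbers this event has vanishing probability, and the `Xᵢ/(1-Xᵢ)`, being identically
distributed and integrable, are uniformly integrable; so their integrals over the event are
uniformly small once `m` is large.
-/

open MeasureTheory ProbabilityTheory Filter
open scoped ENNReal

/-- The "condensation integral" `E[X̄_m / (1 - X̄_m)]`, computed in `[0,∞]`
(with the convention `x/(1-x) = ∞` when `x = 1`, realised via `ℝ≥0∞` division),
where `X̄_m = (X₁ + ⋯ + X_m)/m`. -/
noncomputable def meanRatioInt {Ω : Type*} [MeasurableSpace Ω] (μ : Measure Ω)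
    (X : ℕ → Ω → ℝ) (m : ℕ) : ℝ≥0∞ :=
  ∫⁻ ω, ENNReal.ofReal ((∑ i ∈ Finset.range m, X i ω) / m) /
    ENNReal.ofReal (1 - (∑ i ∈ Finset.range m, X i ω) / m) ∂μ

open Set Topology

noncomputable def odds (x : ℝ) : ℝ≥0∞ := ENNReal.ofReal x / ENNReal.ofReal (1 - x)

lemma monotone_odds : Monotone odds := fun _ _ hxy =>
  ENNReal.div_le_div (ENNReal.ofReal_le_ofReal hxy) (ENNReal.ofReal_le_ofReal (by linarith))

lemma measurable_odds : Measurable odds := by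
  unfold odds
  fun_prop

lemma odds_one : odds 1 = ∞ := by simp [odds]

lemma odds_of_lt_one {x : ℝ} (hx : x < 1) : odds x = ENNReal.ofReal (x / (1 - x)) :=
  (ENNReal.ofReal_div_of_pos (sub_pos.2 hx)).symm

lemma convexOn_div_one_sub : ConvexOn ℝ (Iio 1) fun x : ℝ => x / (1 - x) := by
  -- `x / (1 - x) = (1 - x)⁻¹ - 1`
  have h := ((convexOn_zpow (𝕜 := ℝ) (-1)).comp_affineMap
    (AffineMap.const ℝ ℝ (1 : ℝ) - AffineMap.id ℝ ℝ)).add_const (-1)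
  have hpre : (AffineMap.const ℝ ℝ (1 : ℝ) - AffineMap.id ℝ ℝ) ⁻¹' Ioi 0 = Iio 1 := by
    ext x
    simp
  rw [hpre] at h
  refine h.congr fun x (hx : x < 1) => ?_
  have : (1 : ℝ) - x ≠ 0 := (sub_pos.2 hx).ne'
  simp only [Pi.add_apply, Function.comp_apply, AffineMap.coe_sub, AffineMap.coe_const,
    AffineMap.coe_id, Pi.sub_apply, Function.const_apply, id_eq, zpow_neg_one]
  field_simp
  ring

lemma odds_sum_div_card_le {ι : Type*} {s : Finset ι} (hs : s.Nonempty) {x : ι → ℝ}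
    (hx : ∀ i ∈ s, x i ≤ 1) :
    odds ((∑ i ∈ s, x i) / s.card) ≤ (∑ i ∈ s, odds (x i)) / s.card := by
  by_cases hone : ∃ j ∈ s, x j = 1
  · obtain ⟨j, hj, hxj⟩ := hone
    rw [ENNReal.sum_eq_top.2 ⟨j, hj, by rw [hxj, odds_one]⟩,
      ENNReal.top_div_of_ne_top (ENNReal.natCast_ne_top _)]
    exact le_top
  push Not at hone
  have hlt : ∀ i ∈ s, x i < 1 := fun i hi => (hx i hi).lt_of_ne (hone i hi)
  have hcard : (0 : ℝ) < s.card := Nat.cast_pos.2 hs.card_pos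
  have hmean : (∑ i ∈ s, x i) / s.card < 1 := by
    rw [div_lt_one hcard]
    simpa using Finset.sum_lt_sum_of_nonempty hs hlt
  have hjensen := convexOn_div_one_sub.map_sum_le (t := s) (w := fun _ => (s.card : ℝ)⁻¹)
    (p := x) (fun _ _ => by positivity) (by simp [hcard.ne']) hlt
  simp only [smul_eq_mul] at hjensen
  rw [← Finset.mul_sum, inv_mul_eq_div] at hjensen
  calc odds ((∑ i ∈ s, x i) / s.card)
      = ENNReal.ofReal (((∑ i ∈ s, x i) / s.card) / (1 - (∑ i ∈ s, x i) / s.card)) :=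
        odds_of_lt_one hmean
    _ ≤ ENNReal.ofReal (∑ i ∈ s, (s.card : ℝ)⁻¹ * (x i / (1 - x i))) :=
        ENNReal.ofReal_le_ofReal hjensen
    _ ≤ ∑ i ∈ s, ENNReal.ofReal ((s.card : ℝ)⁻¹ * (x i / (1 - x i))) :=
        Finset.le_sum_of_subadditive _ ENNReal.ofReal_zero.le
          (fun _ _ => ENNReal.ofReal_add_le) _ _
    _ = (∑ i ∈ s, odds (x i)) / s.card := by
        rw [ENNReal.div_eq_inv_mul, Finset.mul_sum]
        refine Finset.sum_congr rfl fun i hi => ?_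
        rw [ENNReal.ofReal_mul (by positivity), odds_of_lt_one (hlt i hi),
          ENNReal.ofReal_inv_of_pos hcard, ENNReal.ofReal_natCast]

lemma odds_lt_one {x : ℝ} (hx : x < 1 / 2) : odds x < 1 := by
  rw [odds_of_lt_one (by linarith), ENNReal.ofReal_lt_one, div_lt_one (by linarith)]
  linarith

lemma meanRatioInt_le_odds_add {Ω : Type*} [MeasurableSpace Ω] {μ : Measure Ω}
    [IsProbabilityMeasure μ] {X : ℕ → Ω → ℝ} (hmeas : ∀ i, Measurable (X i))
    (hX : ∀ᵐ ω ∂μ, ∀ i, X i ω ≤ 1) {m : ℕ} (hm : m ≠ 0) (t : ℝ) {C : ℝ≥0∞}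
    (hC : ∀ i < m,
      ∫⁻ ω in {ω | t < (∑ j ∈ Finset.range m, X j ω) / m}, odds (X i ω) ∂μ ≤ C) :
    meanRatioInt μ X m ≤ odds t + C := by
  set S := {ω | t < (∑ j ∈ Finset.range m, X j ω) / m}
  have hS : MeasurableSet S := measurableSet_lt measurable_const (by fun_prop)
  have hpointwise : ∀ᵐ ω ∂μ, odds ((∑ j ∈ Finset.range m, X j ω) / m) ≤
      odds t + S.indicator (fun ω => (∑ i ∈ Finset.range m, odds (X i ω)) / m) ω := by
    filter_upwards [hX] with ω hω
    by_cases h : ω ∈ S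
    · rw [indicator_of_mem h]
      simpa only [Finset.card_range] using le_add_left (odds_sum_div_card_le
        (s := Finset.range m) (Finset.nonempty_range_iff.2 hm) fun i _ => hω i)
    · rw [indicator_of_notMem h, add_zero]
      exact monotone_odds (not_lt.1 h)
  calc meanRatioInt μ X m = ∫⁻ ω, odds ((∑ j ∈ Finset.range m, X j ω) / m) ∂μ := rfl
    _ ≤ ∫⁻ ω, odds t + S.indicator
          (fun ω => (∑ i ∈ Finset.range m, odds (X i ω)) / m) ω ∂μ :=
        lintegral_mono_ae hpointwise
    _ = odds t + (∑ i ∈ Finset.range m, ∫⁻ ω in S, odds (X i ω) ∂μ) / m := by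
        rw [lintegral_add_left measurable_const, lintegral_const, measure_univ, mul_one,
          lintegral_indicator hS]
        simp only [div_eq_mul_inv]
        rw [lintegral_mul_const' _ _ (by simpa using hm),
          lintegral_finsetSum (f := fun i ω => odds (X i ω)) _
            fun i _ => measurable_odds.comp (hmeas i)]
    _ ≤ odds t + (∑ _i ∈ Finset.range m, C) / m := by
        gcongr with i hi
        exact hC i (Finset.mem_range.1 hi)
    _ = odds t + C := by
        rw [Finset.sum_const, Finset.card_range, nsmul_eq_mul, mul_comm,
          ENNReal.mul_div_cancel_right (by simpa using hm) (ENNReal.natCast_ne_top m)]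

lemma exists_pos_forall_setLIntegral_comp_le {Ω α ι : Type*} [MeasurableSpace Ω]
    [MeasurableSpace α] [Nonempty ι] {μ : Measure Ω} [IsFiniteMeasure μ] {ν : Measure α}
    {X : ι → Ω → α} (hmeas : ∀ i, Measurable (X i)) (hlaw : ∀ i, μ.map (X i) = ν)
    {f : α → ℝ≥0∞} (hf : Measurable f) (hfin : ∫⁻ x, f x ∂ν ≠ ∞) {ε : ℝ} (hε : 0 < ε) :
    ∃ δ > 0, ∀ i s, MeasurableSet s → μ s ≤ ENNReal.ofReal δ →
      ∫⁻ ω in s, f (X i ω) ∂μ ≤ ENNReal.ofReal ε := by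
  obtain ⟨j⟩ := ‹Nonempty ι›
  have hfX : ∀ i, ∫⁻ ω, f (X i ω) ∂μ ≠ ∞ := fun i => by
    rwa [← lintegral_map hf (hmeas i), hlaw i]
  have hident : ∀ i, IdentDistrib (fun ω => (f (X i ω)).toReal)
      (fun ω => (f (X j ω)).toReal) μ μ := fun i =>
    (show IdentDistrib (X i) (X j) μ μ from
      ⟨(hmeas i).aemeasurable, (hmeas j).aemeasurable, by rw [hlaw, hlaw]⟩).comp
      hf.ennreal_toReal
  have hmemLp : MemLp (fun ω => (f (X j ω)).toReal) 1 μ := memLp_one_iff_integrable.2 <|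
    integrable_toReal_of_lintegral_ne_top (hf.comp (hmeas j)).aemeasurable (hfX j)
  obtain ⟨δ, hδ, hUI⟩ :=
    (MemLp.uniformIntegrable_of_identDistrib le_rfl ENNReal.one_ne_top hmemLp hident).2.1 hε
  refine ⟨δ, hδ, fun i s hs hμs => le_of_eq_of_le ?_ (hUI i s hs hμs)⟩
  -- `toReal ∘ f ∘ Xᵢ` recovers `f ∘ Xᵢ` because `f` is `ν`-a.e. finite
  have hfinite : ∀ᵐ ω ∂μ, f (X i ω) ≠ ∞ := by
    filter_upwards [ae_lt_top (hf.comp (hmeas i)) (hfX i)] with ω hω using hω.ne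
  rw [eLpNorm_one_eq_lintegral_enorm]
  simp_rw [enorm_indicator_eq_indicator_enorm]
  rw [lintegral_indicator hs]
  refine setLIntegral_congr_fun_ae hs ?_
  filter_upwards [hfinite] with ω hω _ using (Real.enorm_toReal hω).symm

lemma tendsto_measure_lt_sum_div {Ω : Type*} [MeasurableSpace Ω] {μ : Measure Ω}
    [IsFiniteMeasure μ] {X : ℕ → Ω → ℝ} (hint : Integrable (X 0) μ)
    (hindep : Pairwise fun i j => X i ⟂ᵢ[μ] X j)
    (hident : ∀ i, IdentDistrib (X i) (X 0) μ μ)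
    {t : ℝ} (ht : μ[X 0] < t) :
    Tendsto (fun n : ℕ => μ {ω | t < (∑ i ∈ Finset.range n, X i ω) / n}) atTop (𝓝 0) := by
  have hmeas (n : ℕ) :
      AEStronglyMeasurable (fun ω => (∑ i ∈ Finset.range n, X i ω) / n) μ :=
    ((integrable_finsetSum _ fun i _ =>
      (hident i).integrable_iff.2 hint).div_const _).aestronglyMeasurable
  have hconv := tendstoInMeasure_of_tendsto_ae hmeas (strong_law_ae_real X hint hindep hident)
  refine tendsto_of_tendsto_of_tendsto_of_le_of_le tendsto_const_nhds
    (hconv (ENNReal.ofReal (t - μ[X 0])) (by simpa using ht)) (fun _ => zero_le)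
    fun n => measure_mono fun ω (hω : t < _) => ?_
  show _ ≤ edist _ _
  rw [edist_dist, Real.dist_eq]
  exact ENNReal.ofReal_le_ofReal ((sub_le_sub_right hω.le _).trans (le_abs_self _))

theorem exists_condensing_convolution_general
    {Ω : Type*} [MeasurableSpace Ω] (μ : Measure Ω) [IsProbabilityMeasure μ]
    (ν : Measure ℝ)
    (X : ℕ → Ω → ℝ) (hmeas : ∀ i, Measurable (X i))
    (hindep : iIndepFun X μ)
    (hlaw : ∀ i, μ.map (X i) = ν)
    (hsupp : ν (Set.Icc (0:ℝ) 1)ᶜ = 0)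
    (hint : (∫⁻ x, ENNReal.ofReal x / ENNReal.ofReal (1 - x) ∂ν) < ⊤)
    (hmean : (∫ x, x ∂ν) < 1 / 2) :
    ∃ m : ℕ, 1 ≤ m ∧ meanRatioInt μ X m < 1 := by
  have hX : ∀ i, ∀ᵐ ω ∂μ, X i ω ∈ Icc (0 : ℝ) 1 := fun i =>
    ae_of_ae_map (hmeas i).aemeasurable (by rw [hlaw i]; exact mem_ae_iff.2 hsupp)
  have hident : ∀ i, IdentDistrib (X i) (X 0) μ μ := fun i =>
    ⟨(hmeas i).aemeasurable, (hmeas 0).aemeasurable, by rw [hlaw, hlaw]⟩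
  have hint0 : Integrable (X 0) μ := Integrable.of_bound (hmeas 0).aestronglyMeasurable 1 <| by
    filter_upwards [hX 0] with ω hω using abs_le.2 ⟨by linarith [hω.1], hω.2⟩
  have hmean0 : μ[X 0] = ∫ x, x ∂ν := by
    rw [← hlaw 0]
    exact (integral_map (hmeas 0).aemeasurable aestronglyMeasurable_id).symm
  obtain ⟨t, hmt, ht⟩ := exists_between hmean
  obtain ⟨ε, hε, hεt⟩ := ENNReal.lt_iff_exists_add_pos_lt.1 (odds_lt_one ht)
  obtain ⟨δ, hδ, hsmall⟩ :=
    exists_pos_forall_setLIntegral_comp_le hmeas hlaw measurable_odds hint.ne hε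
  have hconc := tendsto_measure_lt_sum_div hint0 (fun i j hij => hindep.indepFun hij) hident
    (hmean0.trans_lt hmt)
  obtain ⟨m, hμm, hm⟩ := ((hconc.eventually (ge_mem_nhds (ENNReal.ofReal_pos.2 hδ))).and
    (eventually_ge_atTop 1)).exists
  refine ⟨m, hm, (meanRatioInt_le_odds_add hmeas ?_ (by omega) t (C := ε) fun i _ => ?_).trans_lt
    hεt⟩
  · filter_upwards [ae_all_iff.2 hX] with ω hω i using (hω i).2
  · exact (hsmall i _ (measurableSet_lt measurable_const (by fun_prop)) hμm).trans_eq
      ENNReal.ofReal_coe_nnreal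

/-- If `∫₀¹ x/(1-x) dν(x) < ∞` and `∫₀¹ x dν(x) < 1/2`, then there exists `m* ≥ 1`
with `E[X̄_{m*}/(1-X̄_{m*})] < 1`, i.e. the Bianconi–Barabási model `BB(m*)` with
fitness law `ν^{(m*)}` condensates. -/
theorem exists_condensing_convolution
    {Ω : Type*} [MeasurableSpace Ω] (μ : Measure Ω) [IsProbabilityMeasure μ]
    (ν : Measure ℝ) [IsProbabilityMeasure ν]
    (X : ℕ → Ω → ℝ) (hmeas : ∀ i, Measurable (X i))
    (hindep : iIndepFun X μ)
    (hlaw : ∀ i, μ.map (X i) = ν)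
    (hsupp : ν (Set.Icc (0:ℝ) 1)ᶜ = 0)
    (hint : (∫⁻ x, ENNReal.ofReal x / ENNReal.ofReal (1 - x) ∂ν) < ⊤)
    (hmean : (∫ x, x ∂ν) < 1 / 2) :
    ∃ m : ℕ, 1 ≤ m ∧ meanRatioInt μ X m < 1 :=
  exists_condensing_convolution_general μ ν X hmeas hindep hlaw hsupp hint hmean
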